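/- arXiv:1505.07902 — 4 statements merged into one kernel-verified Lean document; each statement's English description precedes it below -/
import Mathlib

section
/- Let s ≥ 3 and N ≥ 1, and let φ : Σ_s → ℝ^N be continuous (with respect to the product topology on Σ_s). Then the general rotation set G_φ is a convex subset of ℝ^N. -/
open Filter Topology

/-- The symbol space `Σ_s`: bi-infinite admissible sequences over an alphabet with
`s` symbols (represented by `Fin s`), i.e. `ξ_i ≠ ξ_{i+1}` for all `i ∈ ℤ`. -/
def SymbSpace (s : ℕ) : Type := {ξ : ℤ → Fin s // ∀ i : ℤ, ξ i ≠ ξ (i + 1)}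

/-- The (left) shift map `σ : Σ_s → Σ_s`, `(σξ)_i = ξ_{i+1}`. -/
def shift {s : ℕ} (ξ : SymbSpace s) : SymbSpace s :=
  ⟨fun i => ξ.1 (i + 1), fun i => ξ.2 (i + 1)⟩

/-- Birkhoff average `A_n(ξ) = (1/n) ∑_{i=0}^{n-1} φ(σ^i ξ)`. -/
noncomputable def birk {s N : ℕ} (φ : SymbSpace s → EuclideanSpace ℝ (Fin N))
    (n : ℕ) (ξ : SymbSpace s) : EuclideanSpace ℝ (Fin N) :=
  (n : ℝ)⁻¹ • ∑ i ∈ Finset.range n, φ (shift^[i] ξ)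

/-- The product topology on `Σ_s` (each factor `Fin s` carrying the discrete topology). -/
noncomputable instance (s : ℕ) : TopologicalSpace (SymbSpace s) := by
  unfold SymbSpace; infer_instance

/-- The general rotation set `G_φ`: all limits of Birkhoff averages `A_{n_k}(ξ)` along
strictly increasing sequences of positive integers `n_k`, over all `ξ ∈ Σ_s`. -/
def GenRot {s N : ℕ} (φ : SymbSpace s → EuclideanSpace ℝ (Fin N)) :
    Set (EuclideanSpace ℝ (Fin N)) :=
  {ρ | ∃ (ξ : SymbSpace s) (n : ℕ → ℕ), StrictMono n ∧ (∀ k, 0 < n k) ∧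
      Tendsto (fun k => birk φ (n k) ξ) atTop (nhds ρ)}

/-!
Let `ξ`, `η` realise `x = lim A_{n_j}(ξ)` and `y = lim A_{m_j}(η)`, and let `0 ≤ t ≤ 1`. We write
one admissible sequence in stages: stage `j` repeats the segment `ξ[0, n_j)` and then the segment
`η[0, m_j)` so often that the stage dominates all earlier ones and its two parts fill fractions
close to `t` and `1 - t` of everything written up to its end. Consecutive segments are joined by a
glue symbol differing from both neighbours, which exists because `s ≥ 3`. By uniform continuity,
`φ` only sees a window `[-W, W]` up to an error `ε`, so along a copied segment the Birkhoff sum of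
the new sequence is that of the original up to `ε` per step and a constant per segment. Both errors
vanish in the averages at the ends of the stages, which therefore converge to `t x + (1 - t) y`.
-/

open Finset

lemma exists_ne_and_ne_of_three_le_card {α : Type*} [Fintype α] (h : 3 ≤ Fintype.card α)
    (a b : α) : ∃ c, c ≠ a ∧ c ≠ b := by
  classical
  obtain ⟨c, hc, hca⟩ := (univ.erase b).exists_mem_ne
    (by rw [card_erase_of_mem (mem_univ b), card_univ]; omega) a
  exact ⟨c, hca, ne_of_mem_erase hc⟩

lemma sum_range_add_ite_lt {M : Type*} [AddCommMonoid M] (p q : ℕ) (u v : M) :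
    ∑ k ∈ range (p + q), (if k < p then u else v) = p • u + q • v := by
  rw [sum_range_add, sum_congr rfl fun k hk => if_pos (mem_range.mp hk),
    sum_congr rfl fun k _ => if_neg (Nat.not_lt.mpr (Nat.le_add_right p k))]
  simp

lemma norm_birkhoffSum_le {α E : Type*} [SeminormedAddCommGroup E] {φ : α → E} {C : ℝ}
    (hC : ∀ x, ‖φ x‖ ≤ C) (f : α → α) (n : ℕ) (x : α) : ‖birkhoffSum f φ n x‖ ≤ n * C := by
  simpa [birkhoffSum] using
    (norm_sum_le _ _).trans (sum_le_card_nsmul (range n) _ C fun k _ => hC _)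

lemma tendsto_zero_of_norm_le_add_mul {ι E : Type*} [SeminormedAddCommGroup E] {l : Filter ι}
    {e : ι → E} {δ : ι → ℝ} (hδ : Tendsto δ l (𝓝 0))
    (h : ∀ ε > 0, ∃ K, ∀ i, ‖e i‖ ≤ ε + K * δ i) : Tendsto e l (𝓝 0) := by
  refine Metric.tendsto_nhds.mpr fun ε hε => ?_
  obtain ⟨K, hK⟩ := h (ε / 2) (half_pos hε)
  have hsmall : ∀ᶠ i in l, K * δ i < ε / 2 :=
    (hδ.const_mul K).eventually (gt_mem_nhds (by simpa using half_pos hε))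
  filter_upwards [hsmall] with i hi
  rw [dist_zero_right]
  linarith [hK i]

namespace SymbSpace

variable {s : ℕ}

lemma shift_iterate_apply (ξ : SymbSpace s) (k : ℕ) (i : ℤ) :
    (shift^[k] ξ).1 i = ξ.1 (i + k) := by
  induction k generalizing ξ with
  | zero => simp
  | succ k ih =>
    rw [Function.iterate_succ_apply, ih]
    simp only [shift, Nat.cast_succ, add_assoc]

lemma continuous_val_apply (i : ℤ) : Continuous fun ξ : SymbSpace s => ξ.1 i :=
  (continuous_apply i).comp continuous_subtype_val

instance : CompactSpace (SymbSpace s) := by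
  have h : IsClosed {ξ : ℤ → Fin s | ∀ i : ℤ, ξ i ≠ ξ (i + 1)} := by
    simp only [Set.ofPred_forall]
    exact isClosed_iInter fun i =>
      (isClosed_discrete {p : Fin s × Fin s | p.1 ≠ p.2}).preimage
        (f := fun ξ : ℤ → Fin s => (ξ i, ξ (i + 1))) (by fun_prop)
  exact isCompact_iff_compactSpace.mp h.isCompact

def AgreeNear (W : ℕ) (x y : SymbSpace s) : Prop := ∀ i : ℤ, |i| ≤ W → x.1 i = y.1 i

lemma isClosed_agreeNear (W : ℕ) :
    IsClosed {p : SymbSpace s × SymbSpace s | AgreeNear W p.1 p.2} := by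
  simp only [AgreeNear, Set.ofPred_forall]
  exact isClosed_iInter fun i => isClosed_iInter fun _ =>
    isClosed_eq ((continuous_val_apply i).comp continuous_fst)
      ((continuous_val_apply i).comp continuous_snd)

theorem exists_agreeNear_dist_lt {E : Type*} [PseudoMetricSpace E] {φ : SymbSpace s → E}
    (hφ : Continuous φ) {ε : ℝ} (hε : 0 < ε) :
    ∃ W : ℕ, ∀ x y, AgreeNear W x y → dist (φ x) (φ y) < ε := by
  have hfar : IsCompact {p : SymbSpace s × SymbSpace s | ε ≤ dist (φ p.1) (φ p.2)} :=
    (isClosed_le continuous_const (by fun_prop)).isCompact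
  have hdiag : {p : SymbSpace s × SymbSpace s | ε ≤ dist (φ p.1) (φ p.2)} ∩
      ⋂ W : ℕ, {p | AgreeNear W p.1 p.2} = ∅ := by
    refine Set.eq_empty_of_forall_notMem fun ⟨x, y⟩ ⟨hxy, hagree⟩ => ?_
    have : x = y := Subtype.ext <| funext fun i =>
      Set.mem_iInter.mp hagree i.natAbs i (Int.abs_eq_natAbs i).le
    simp only [Set.mem_ofPred_eq, this, dist_self] at hxy
    linarith
  obtain ⟨W, hW⟩ := hfar.elim_directed_family_closed _ isClosed_agreeNear hdiag
    (Antitone.directed_ge fun V W hVW p hp i hi => hp i (hi.trans (by exact_mod_cast hVW)))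
  refine ⟨W, fun x y hxy => not_le.mp fun h => ?_⟩
  exact (Set.eq_empty_iff_forall_notMem.mp hW) (x, y) ⟨h, hxy⟩

section Shadowing

variable {E : Type*} [NormedAddCommGroup E] {φ : SymbSpace s → E} {C ε : ℝ} {W : ℕ}
  (hC : ∀ x, ‖φ x‖ ≤ C) (hW : ∀ x y, AgreeNear W x y → dist (φ x) (φ y) ≤ ε)
include hC hW

/-- Only the `2 W` times within `W` of an end of `[0, L)` see windows on which `x` and `y` may
differ. -/
theorem dist_birkhoffSum_le_of_eqOn {x y : SymbSpace s} {L : ℕ}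
    (hxy : ∀ i : ℤ, 0 ≤ i → i < L → x.1 i = y.1 i) :
    dist (birkhoffSum shift φ L x) (birkhoffSum shift φ L y) ≤ L * ε + 2 * W * (2 * C) := by
  have hε : 0 ≤ ε := dist_nonneg.trans (hW x x fun _ _ => rfl)
  set ends := range W ∪ Ico (L - W) L
  have hterm : ∀ r ∈ range L, dist (φ (shift^[r] x)) (φ (shift^[r] y)) ≤
      ε + if r ∈ ends then 2 * C else 0 := by
    intro r hr
    by_cases hre : r ∈ ends
    · rw [if_pos hre]
      have := (dist_le_norm_add_norm _ _).trans (add_le_add (hC (shift^[r] x)) (hC (shift^[r] y)))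
      linarith
    · simp only [ends, mem_union, mem_range, mem_Ico, not_or, not_and, not_lt] at hre hr
      rw [if_neg (by simp [ends]; omega), add_zero]
      refine hW _ _ fun i hi => ?_
      rw [shift_iterate_apply, shift_iterate_apply]
      have := abs_le.mp hi
      exact hxy _ (by omega) (by omega)
  have hcard : #(range L ∩ ends) ≤ 2 * W :=
    (card_le_card inter_subset_right).trans <| (card_union_le _ _).trans (by simp; omega)
  calc dist (birkhoffSum shift φ L x) (birkhoffSum shift φ L y)
      ≤ ∑ r ∈ range L, (ε + if r ∈ ends then 2 * C else 0) :=
        (dist_birkhoffSum_birkhoffSum_le _ _ _ _ _).trans (sum_le_sum hterm)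
    _ = L * ε + #(range L ∩ ends) * (2 * C) := by
        rw [sum_add_distrib, sum_ite_mem, sum_const, sum_const, card_range]; simp
    _ ≤ L * ε + 2 * W * (2 * C) := by
        have hC0 : 0 ≤ C := (norm_nonneg _).trans (hC x)
        gcongr
        exact_mod_cast hcard

end Shadowing

section Concat

variable (len : ℕ → ℕ)

/-- Block `k` occupies the positions `[blockStart len k, blockStart len k + len k)` and is
followed by one glue symbol. -/
def blockStart (k : ℕ) : ℕ := ∑ u ∈ range k, (len u + 1)

lemma blockStart_succ (k : ℕ) : blockStart len (k + 1) = blockStart len k + (len k + 1) :=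
  sum_range_succ _ _

lemma blockStart_ite (p q a b : ℕ) :
    blockStart (fun k => if k < p then a else b) (p + q) = p * (a + 1) + q * (b + 1) := by
  rw [blockStart, ← smul_eq_mul, ← smul_eq_mul (a := q), ← sum_range_add_ite_lt]
  exact sum_congr rfl fun k _ => by split_ifs <;> rfl

/-- The (block, offset) of a nonnegative position; offset `len k` is the glue symbol after
block `k`. -/
def cursor : ℕ → ℕ × ℕ
  | 0 => (0, 0)
  | i + 1 => if (cursor i).2 < len (cursor i).1 then ((cursor i).1, (cursor i).2 + 1)
      else ((cursor i).1 + 1, 0)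

lemma cursor_snd_le (i : ℕ) : (cursor len i).2 ≤ len (cursor len i).1 := by
  induction i with
  | zero => simp [cursor]
  | succ i ih => rw [cursor]; split_ifs with h <;> simp; omega

lemma cursor_add_of_eq {i k : ℕ} (hi : cursor len i = (k, 0)) {r : ℕ} (hr : r ≤ len k) :
    cursor len (i + r) = (k, r) := by
  induction r with
  | zero => exact hi
  | succ r ih => rw [← add_assoc, cursor, ih (by omega), if_pos (by simp; omega)]

lemma cursor_blockStart (k : ℕ) : cursor len (blockStart len k) = (k, 0) := by
  induction k with
  | zero => rfl
  | succ k ih =>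
    rw [blockStart_succ, ← add_assoc, cursor, cursor_add_of_eq len ih le_rfl, if_neg (by simp)]

lemma cursor_blockStart_add (k : ℕ) {r : ℕ} (hr : r ≤ len k) :
    cursor len (blockStart len k + r) = (k, r) :=
  cursor_add_of_eq len (cursor_blockStart len k) hr

variable (hs : 3 ≤ s) (src : ℕ → SymbSpace s)

noncomputable def glue (k : ℕ) : Fin s :=
  (exists_ne_and_ne_of_three_le_card (by simpa using hs)
    ((src k).1 ((len k : ℤ) - 1)) ((src (k + 1)).1 0)).choose

lemma glue_ne_last (k : ℕ) : glue len hs src k ≠ (src k).1 ((len k : ℤ) - 1) :=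
  (exists_ne_and_ne_of_three_le_card (by simpa using hs) _ _).choose_spec.1

lemma glue_ne_first (k : ℕ) : glue len hs src k ≠ (src (k + 1)).1 0 :=
  (exists_ne_and_ne_of_three_le_card (by simpa using hs) _ _).choose_spec.2

noncomputable def blockLetter (c : ℕ × ℕ) : Fin s :=
  if c.2 < len c.1 then (src c.1).1 c.2 else glue len hs src c.1

/-- Negative positions carry the past of `src 0`. -/
noncomputable def concatSeq (i : ℤ) : Fin s :=
  if i < 0 then (src 0).1 i else blockLetter len hs src (cursor len i.toNat)

variable {len} (hlen : ∀ k, 0 < len k)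
include hlen

lemma blockLetter_cursor_ne (i : ℕ) :
    blockLetter len hs src (cursor len i) ≠ blockLetter len hs src (cursor len (i + 1)) := by
  have hr := cursor_snd_le len i
  rw [cursor]
  generalize cursor len i = c at hr ⊢
  obtain ⟨k, r⟩ := c
  dsimp only at hr ⊢
  rcases hr.lt_or_eq with hr | rfl
  · rw [if_pos hr, blockLetter, blockLetter, if_pos hr]
    dsimp only
    split_ifs with hr'
    · simpa using (src k).2 r
    · rw [show (r : ℤ) = len k - 1 by omega]
      exact (glue_ne_last len hs src k).symm
  · rw [if_neg (lt_irrefl _), blockLetter, blockLetter, if_neg (lt_irrefl _), if_pos (hlen _)]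
    exact glue_ne_first len hs src k

lemma concatSeq_ne_succ (i : ℤ) : concatSeq len hs src i ≠ concatSeq len hs src (i + 1) := by
  unfold concatSeq
  rcases lt_trichotomy i (-1) with h | rfl | h
  · rw [if_pos (by omega), if_pos (by omega)]
    exact (src 0).2 i
  · rw [if_pos (by norm_num), if_neg (by norm_num)]
    simpa [cursor, blockLetter, hlen 0] using (src 0).2 (-1)
  · rw [if_neg (by omega), if_neg (by omega), show (i + 1).toNat = i.toNat + 1 by omega]
    exact blockLetter_cursor_ne hs src hlen _

noncomputable def concat : SymbSpace s := ⟨concatSeq len hs src, concatSeq_ne_succ hs src hlen⟩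

lemma concat_shift_iterate_apply (k : ℕ) {i : ℤ} (h0 : 0 ≤ i) (hi : i < len k) :
    (shift^[blockStart len k] (concat hs src hlen)).1 i = (src k).1 i := by
  rw [shift_iterate_apply]
  change concatSeq len hs src _ = _
  rw [concatSeq, if_neg (by omega),
    show (i + blockStart len k).toNat = blockStart len k + i.toNat by omega,
    cursor_blockStart_add len k (by omega), blockLetter, if_pos (by dsimp only; omega)]
  simp [Int.toNat_of_nonneg h0]

variable {E : Type*} [NormedAddCommGroup E] {φ : SymbSpace s → E} {C ε : ℝ} {W : ℕ}

theorem dist_birkhoffSum_concat_le (hC : ∀ x, ‖φ x‖ ≤ C)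
    (hW : ∀ x y, AgreeNear W x y → dist (φ x) (φ y) ≤ ε) (K : ℕ) :
    dist (birkhoffSum shift φ (blockStart len K) (concat hs src hlen))
        (∑ k ∈ range K, birkhoffSum shift φ (len k) (src k)) ≤
      blockStart len K * ε + K * ((4 * W + 1) * C) := by
  have hε : 0 ≤ ε := dist_nonneg.trans (hW (src 0) (src 0) fun _ _ => rfl)
  induction K with
  | zero => simp [blockStart]
  | succ K ih =>
    set x := shift^[blockStart len K] (concat hs src hlen)
    have hblock := dist_birkhoffSum_le_of_eqOn hC hW (x := x) (y := src K) (L := len K)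
      fun i h0 hi => concat_shift_iterate_apply hs src hlen K h0 hi
    have hglue : dist (birkhoffSum shift φ (len K + 1) x) (birkhoffSum shift φ (len K) x) ≤ C := by
      rw [birkhoffSum_succ, dist_self_add_left]
      exact hC _
    rw [blockStart_succ, birkhoffSum_add, sum_range_succ]
    refine (dist_add_add_le _ _ _ _).trans ?_
    have := dist_triangle (birkhoffSum shift φ (len K + 1) x) (birkhoffSum shift φ (len K) x)
      (birkhoffSum shift φ (len K) (src K))
    push_cast
    nlinarith

end Concat

end SymbSpace

noncomputable section Stages

variable (n m : ℕ → ℕ) (t : ℝ)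

/-- Stage `j` consists of `m j ⌊t M⌋` blocks of length `n j`, then `n j (M - ⌊t M⌋)` blocks of
length `m j`, each followed by a glue symbol; `stageStart j` is the total length of the stages
before it, and `M = (j + 1) (stageStart j + j + 1)` makes stage `j` dominate them. -/
def stageStart : ℕ → ℕ
  | 0 => 0
  | j + 1 =>
    let M := (j + 1) * (stageStart j + j + 1)
    stageStart j + (m j * ⌊t * M⌋₊ * (n j + 1) + n j * (M - ⌊t * M⌋₊) * (m j + 1)) + 1

def stageScale (j : ℕ) : ℕ := (j + 1) * (stageStart n m t j + j + 1)

def firstCount (j : ℕ) : ℕ := m j * ⌊t * stageScale n m t j⌋₊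

def secondCount (j : ℕ) : ℕ := n j * (stageScale n m t j - ⌊t * stageScale n m t j⌋₊)

def stageLength (j : ℕ) : ℕ := firstCount n m t j * (n j + 1) + secondCount n m t j * (m j + 1)

/-- Controls the error terms at the end of stage `j`: the earlier stages, a constant per stage
and a constant per block of stage `j`. -/
def stageOverhead (j : ℕ) : ℕ :=
  stageStart n m t j + j + 1 + firstCount n m t j + secondCount n m t j

lemma stageStart_succ (j : ℕ) :
    stageStart n m t (j + 1) = stageStart n m t j + stageLength n m t j + 1 := rfl

lemma stageScale_pos (j : ℕ) : 0 < stageScale n m t j := Nat.mul_pos (by omega) (by omega)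

lemma blockStart_stageLength (j : ℕ) :
    SymbSpace.blockStart (stageLength n m t) j = stageStart n m t j := by
  induction j with
  | zero => rfl
  | succ j ih => rw [SymbSpace.blockStart_succ, ih, stageStart_succ, add_assoc]

lemma stageLength_pos {n m : ℕ → ℕ} (hn0 : ∀ j, 0 < n j) (hm0 : ∀ j, 0 < m j) (j : ℕ) :
    0 < stageLength n m t j := by
  unfold stageLength firstCount secondCount
  rcases Nat.eq_zero_or_pos ⌊t * stageScale n m t j⌋₊ with h | h
  · rw [h, Nat.sub_zero]
    exact Nat.add_pos_right _
      (Nat.mul_pos (Nat.mul_pos (hn0 j) (stageScale_pos n m t j)) (Nat.succ_pos _))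
  · exact Nat.add_pos_left (Nat.mul_pos (Nat.mul_pos (hm0 j) h) (Nat.succ_pos _)) _

variable {t} (ht1 : t ≤ 1)
include ht1

lemma floor_le_stageScale (j : ℕ) : ⌊t * stageScale n m t j⌋₊ ≤ stageScale n m t j :=
  Nat.floor_le_of_le (mul_le_of_le_one_left (Nat.cast_nonneg _) ht1)

lemma stageLength_eq (j : ℕ) :
    stageLength n m t j =
      n j * m j * stageScale n m t j + firstCount n m t j + secondCount n m t j := by
  have ha := floor_le_stageScale n m ht1 j
  unfold stageLength firstCount secondCount
  generalize ⌊t * stageScale n m t j⌋₊ = a at ha ⊢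
  obtain ⟨c, hc⟩ := Nat.exists_eq_add_of_le ha
  rw [hc, Nat.add_sub_cancel_left]
  ring

lemma stageStart_succ_le (j : ℕ) :
    stageStart n m t (j + 1) ≤ n j * m j * stageScale n m t j + stageOverhead n m t j := by
  rw [stageStart_succ, stageLength_eq n m ht1, stageOverhead]
  omega

lemma le_stageStart_succ (j : ℕ) : n j * m j * stageScale n m t j ≤ stageStart n m t (j + 1) := by
  rw [stageStart_succ, stageLength_eq n m ht1]
  omega

variable {n m} (hn0 : ∀ j, 0 < n j) (hm0 : ∀ j, 0 < m j)
include hn0 hm0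

lemma stageOverhead_le (j : ℕ) :
    (stageOverhead n m t j : ℝ) ≤
      (1 / (j + 1 : ℝ) + 1 / n j + 1 / m j) * stageStart n m t (j + 1) := by
  set M := stageScale n m t j
  set B := stageStart n m t j
  have hnat : stageOverhead n m t j ≤ n j * m j * (B + j + 1) + m j * M + n j * M := by
    have h1 : B + j + 1 ≤ n j * m j * (B + j + 1) :=
      Nat.le_mul_of_pos_left _ (Nat.mul_pos (hn0 j) (hm0 j))
    have h2 : firstCount n m t j ≤ m j * M :=
      Nat.mul_le_mul_left _ (floor_le_stageScale n m ht1 j)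
    have h3 : secondCount n m t j ≤ n j * M := Nat.mul_le_mul_left _ (Nat.sub_le _ _)
    rw [stageOverhead]
    omega
  have hcore : ((n j * m j * (B + j + 1) + m j * M + n j * M : ℕ) : ℝ) =
      (1 / (j + 1 : ℝ) + 1 / n j + 1 / m j) * (n j * m j * M : ℕ) := by
    have := hn0 j
    have := hm0 j
    simp only [M, stageScale]
    push_cast
    field_simp
    ring
  calc (stageOverhead n m t j : ℝ)
      ≤ ((n j * m j * (B + j + 1) + m j * M + n j * M : ℕ) : ℝ) := Nat.cast_le.mpr hnat
    _ ≤ _ := by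
      rw [hcore]
      gcongr
      exact le_stageStart_succ n m ht1 j

variable (hn : StrictMono n) (hm : StrictMono m)
include hn hm

lemma tendsto_stageOverhead_div :
    Tendsto (fun j => (stageOverhead n m t j : ℝ) / stageStart n m t (j + 1)) atTop (𝓝 0) := by
  have hinv : ∀ {u : ℕ → ℕ}, StrictMono u → Tendsto (fun j => 1 / (u j : ℝ)) atTop (𝓝 0) :=
    fun hu => tendsto_one_div_atTop_nhds_zero_nat.comp hu.tendsto_atTop
  have hρ := (tendsto_one_div_add_atTop_nhds_zero_nat.add (hinv hn)).add (hinv hm)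
  simp only [add_zero] at hρ
  refine tendsto_of_tendsto_of_tendsto_of_le_of_le tendsto_const_nhds hρ
    (fun j => by positivity) fun j => ?_
  rw [div_le_iff₀ (by rw [stageStart_succ]; positivity)]
  exact stageOverhead_le ht1 hn0 hm0 j

lemma tendsto_stageCore_div :
    Tendsto (fun j => (n j * m j * stageScale n m t j : ℝ) / stageStart n m t (j + 1)) atTop
      (𝓝 1) := by
  have h := (tendsto_stageOverhead_div ht1 hn0 hm0 hn hm).const_sub 1
  rw [sub_zero] at h
  refine tendsto_of_tendsto_of_tendsto_of_le_of_le h tendsto_const_nhds (fun j => ?_) fun j => ?_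
  all_goals have hT : (0 : ℝ) < stageStart n m t (j + 1) := by rw [stageStart_succ]; positivity
  · rw [one_sub_div hT.ne', div_le_div_iff_of_pos_right hT, sub_le_iff_le_add]
    exact_mod_cast stageStart_succ_le n m ht1 j
  · rw [div_le_one hT]
    exact_mod_cast le_stageStart_succ n m ht1 j

omit ht1 hn0 hm0 hn hm in
lemma tendsto_floor_div_stageScale (ht0 : 0 ≤ t) :
    Tendsto (fun j => (⌊t * stageScale n m t j⌋₊ : ℝ) / stageScale n m t j) atTop (𝓝 t) := by
  have hM : Tendsto (stageScale n m t) atTop atTop :=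
    tendsto_atTop_mono (fun j => Nat.le_mul_of_pos_right _ (by omega)) (tendsto_add_atTop_nat 1)
  exact (tendsto_nat_floor_mul_div_atTop ht0).comp (tendsto_natCast_atTop_atTop.comp hM)

lemma tendsto_firstCount_mul_div (ht0 : 0 ≤ t) :
    Tendsto (fun j => (firstCount n m t j * n j : ℝ) / stageStart n m t (j + 1)) atTop (𝓝 t) := by
  have h := (tendsto_floor_div_stageScale (n := n) (m := m) ht0).mul
    (tendsto_stageCore_div ht1 hn0 hm0 hn hm)
  rw [mul_one] at h
  refine h.congr fun j => ?_
  have : (stageScale n m t j : ℝ) ≠ 0 := by exact_mod_cast (stageScale_pos n m t j).ne'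
  simp only [firstCount, Nat.cast_mul]
  field_simp

lemma tendsto_secondCount_mul_div (ht0 : 0 ≤ t) :
    Tendsto (fun j => (secondCount n m t j * m j : ℝ) / stageStart n m t (j + 1)) atTop
      (𝓝 (1 - t)) := by
  have h := ((tendsto_floor_div_stageScale (n := n) (m := m) ht0).const_sub 1).mul
    (tendsto_stageCore_div ht1 hn0 hm0 hn hm)
  rw [mul_one] at h
  refine h.congr fun j => ?_
  have : (stageScale n m t j : ℝ) ≠ 0 := by exact_mod_cast (stageScale_pos n m t j).ne'
  simp only [secondCount, Nat.cast_mul, Nat.cast_sub (floor_le_stageScale n m ht1 j)]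
  field_simp

end Stages

noncomputable section Construction

variable {s : ℕ} (hs : 3 ≤ s) (n m : ℕ → ℕ) (t : ℝ) (ξ η : SymbSpace s)

def stageBlockSource (j k : ℕ) : SymbSpace s := if k < firstCount n m t j then ξ else η

def stageBlockLength (j k : ℕ) : ℕ := if k < firstCount n m t j then n j else m j

lemma blockStart_stageBlockLength (j : ℕ) :
    SymbSpace.blockStart (stageBlockLength n m t j) (firstCount n m t j + secondCount n m t j) =
      stageLength n m t j :=
  SymbSpace.blockStart_ite _ _ _ _

variable {n m} (hn0 : ∀ j, 0 < n j) (hm0 : ∀ j, 0 < m j)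

include hn0 hm0 in
lemma stageBlockLength_pos (j k : ℕ) : 0 < stageBlockLength n m t j k := by
  unfold stageBlockLength
  split_ifs <;> simp [hn0, hm0]

/-- Only the first `stageLength n m t j` coordinates of stage `j` are used. -/
def stagePoint (j : ℕ) : SymbSpace s :=
  SymbSpace.concat hs (stageBlockSource n m t ξ η j) (stageBlockLength_pos t hn0 hm0 j)

def stagedPoint : SymbSpace s :=
  SymbSpace.concat hs (stagePoint hs t ξ η hn0 hm0) (stageLength_pos t hn0 hm0)

variable {E : Type*} [NormedAddCommGroup E] [NormedSpace ℝ E] {φ : SymbSpace s → E}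
  {C ε : ℝ} {W : ℕ} (hC : ∀ x, ‖φ x‖ ≤ C)
  (hW : ∀ x y, SymbSpace.AgreeNear W x y → dist (φ x) (φ y) ≤ ε)
include hC hW

lemma dist_birkhoffSum_stagePoint_le (j : ℕ) :
    dist (birkhoffSum shift φ (stageLength n m t j) (stagePoint hs t ξ η hn0 hm0 j))
        ((firstCount n m t j : ℝ) • birkhoffSum shift φ (n j) ξ +
          (secondCount n m t j : ℝ) • birkhoffSum shift φ (m j) η) ≤
      stageLength n m t j * ε +
        (firstCount n m t j + secondCount n m t j) * ((4 * W + 1) * C) := by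
  have h := SymbSpace.dist_birkhoffSum_concat_le hs (stageBlockSource n m t ξ η j)
    (stageBlockLength_pos t hn0 hm0 j) hC hW (firstCount n m t j + secondCount n m t j)
  have hsum : ∑ k ∈ range (firstCount n m t j + secondCount n m t j),
      birkhoffSum shift φ (stageBlockLength n m t j k) (stageBlockSource n m t ξ η j k) =
        (firstCount n m t j : ℝ) • birkhoffSum shift φ (n j) ξ +
          (secondCount n m t j : ℝ) • birkhoffSum shift φ (m j) η := by
    rw [Nat.cast_smul_eq_nsmul, Nat.cast_smul_eq_nsmul, ← sum_range_add_ite_lt]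
    exact sum_congr rfl fun k _ => by unfold stageBlockLength stageBlockSource; split_ifs <;> rfl
  rw [blockStart_stageBlockLength, hsum] at h
  exact_mod_cast h

theorem norm_birkhoffSum_stagedPoint_sub_le (j : ℕ) :
    ‖birkhoffSum shift φ (stageStart n m t (j + 1)) (stagedPoint hs t ξ η hn0 hm0) -
        ((firstCount n m t j : ℝ) • birkhoffSum shift φ (n j) ξ +
          (secondCount n m t j : ℝ) • birkhoffSum shift φ (m j) η)‖ ≤
      2 * ε * stageStart n m t (j + 1) + (4 * W + 2) * C * stageOverhead n m t j := by
  have hε : 0 ≤ ε := dist_nonneg.trans (hW ξ ξ fun _ _ => rfl)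
  have hC0 : 0 ≤ C := (norm_nonneg _).trans (hC ξ)
  set ζ := stagePoint hs t ξ η hn0 hm0
  set L := stageLength n m t
  set X := birkhoffSum shift φ (stageStart n m t (j + 1)) (stagedPoint hs t ξ η hn0 hm0)
  set P := ∑ i ∈ range j, birkhoffSum shift φ (L i) (ζ i)
  set Q := birkhoffSum shift φ (L j) (ζ j)
  set R := (firstCount n m t j : ℝ) • birkhoffSum shift φ (n j) ξ +
    (secondCount n m t j : ℝ) • birkhoffSum shift φ (m j) η
  have hall : dist X (P + Q) ≤ stageStart n m t (j + 1) * ε + (j + 1 : ℕ) * ((4 * W + 1) * C) := by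
    have h := SymbSpace.dist_birkhoffSum_concat_le hs ζ (stageLength_pos t hn0 hm0) hC hW (j + 1)
    rwa [blockStart_stageLength, sum_range_succ] at h
  have hlast : dist Q R ≤ L j * ε +
      (firstCount n m t j + secondCount n m t j) * ((4 * W + 1) * C) :=
    dist_birkhoffSum_stagePoint_le hs t ξ η hn0 hm0 hC hW j
  have hearlier : ‖P‖ ≤ stageStart n m t j * C := by
    refine (norm_sum_le _ _).trans <| (sum_le_sum fun i _ => norm_birkhoffSum_le hC _ _ _).trans ?_
    rw [← sum_mul, ← blockStart_stageLength, SymbSpace.blockStart]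
    gcongr
    push_cast
    exact sum_le_sum fun i _ => by linarith
  have hLT : (L j : ℝ) ≤ stageStart n m t (j + 1) := by
    rw [stageStart_succ]; push_cast; linarith
  calc ‖X - R‖ = ‖(X - (P + Q)) + P + (Q - R)‖ := by congr 1; abel
    _ ≤ ‖X - (P + Q)‖ + ‖P‖ + ‖Q - R‖ := norm_add₃_le
    _ ≤ _ := by
      rw [← dist_eq_norm, ← dist_eq_norm]
      unfold stageOverhead
      push_cast at hall hlast ⊢
      nlinarith [mul_nonneg hC0 (Nat.cast_nonneg (α := ℝ) W),
        mul_nonneg hC0 (Nat.cast_nonneg (α := ℝ) (stageStart n m t j))]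

end Construction

lemma birk_eq_inv_smul_birkhoffSum {s N : ℕ} (φ : SymbSpace s → EuclideanSpace ℝ (Fin N)) (k : ℕ)
    (ξ : SymbSpace s) : birk φ k ξ = (k : ℝ)⁻¹ • birkhoffSum shift φ k ξ := rfl

section Convexity

variable {s N : ℕ} (hs : 3 ≤ s) {φ : SymbSpace s → EuclideanSpace ℝ (Fin N)} (hφ : Continuous φ)
  (ξ η : SymbSpace s) {n m : ℕ → ℕ} (hn : StrictMono n) (hn0 : ∀ j, 0 < n j)
  (hm : StrictMono m) (hm0 : ∀ j, 0 < m j) {t : ℝ} (ht1 : t ≤ 1)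
include hs hφ hn hn0 hm hm0 ht1

theorem tendsto_birk_stagedPoint_sub :
    Tendsto (fun j => birk φ (stageStart n m t (j + 1)) (stagedPoint hs t ξ η hn0 hm0) -
      (((firstCount n m t j * n j : ℝ) / stageStart n m t (j + 1)) • birk φ (n j) ξ +
        ((secondCount n m t j * m j : ℝ) / stageStart n m t (j + 1)) • birk φ (m j) η))
      atTop (𝓝 0) := by
  refine tendsto_zero_of_norm_le_add_mul (tendsto_stageOverhead_div ht1 hn0 hm0 hn hm)
    fun ε hε => ?_
  obtain ⟨C, hC⟩ := (isCompact_range hφ).isBounded.exists_norm_le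
  obtain ⟨W, hW⟩ := SymbSpace.exists_agreeNear_dist_lt hφ (half_pos hε)
  refine ⟨(4 * W + 2) * C, fun j => ?_⟩
  have hT : (0 : ℝ) < stageStart n m t (j + 1) := by rw [stageStart_succ]; positivity
  have h := norm_birkhoffSum_stagedPoint_sub_le hs t ξ η hn0 hm0
    (fun x => hC _ (Set.mem_range_self x)) (fun x y hxy => (hW x y hxy).le) j
  have hn' : (n j : ℝ) ≠ 0 := by exact_mod_cast (hn0 j).ne'
  have hm' : (m j : ℝ) ≠ 0 := by exact_mod_cast (hm0 j).ne'
  set T : ℝ := (stageStart n m t (j + 1) : ℝ)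
  calc _ = ‖T⁻¹ • (birkhoffSum shift φ (stageStart n m t (j + 1)) (stagedPoint hs t ξ η hn0 hm0) -
        ((firstCount n m t j : ℝ) • birkhoffSum shift φ (n j) ξ +
          (secondCount n m t j : ℝ) • birkhoffSum shift φ (m j) η))‖ := by
        simp only [birk_eq_inv_smul_birkhoffSum, smul_smul, smul_sub, smul_add]
        congr 4 <;> field_simp
    _ ≤ T⁻¹ * (2 * (ε / 2) * T + (4 * W + 2) * C * stageOverhead n m t j) := by
        rw [norm_smul, norm_inv, Real.norm_of_nonneg hT.le]
        gcongr
    _ = ε + (4 * W + 2) * C * (stageOverhead n m t j / T) := by field_simp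

theorem smul_add_one_sub_smul_mem_genRot {x y : EuclideanSpace ℝ (Fin N)}
    (hx : Tendsto (fun j => birk φ (n j) ξ) atTop (𝓝 x))
    (hy : Tendsto (fun j => birk φ (m j) η) atTop (𝓝 y)) (ht0 : 0 ≤ t) :
    t • x + (1 - t) • y ∈ GenRot φ := by
  refine ⟨stagedPoint hs t ξ η hn0 hm0, fun j => stageStart n m t (j + 1),
    strictMono_nat_of_lt_succ fun j => ?_, fun j => ?_, ?_⟩
  · simp only [stageStart_succ n m t (j + 1)]
    omega
  · simp only [stageStart_succ]
    omega
  have h := (((tendsto_firstCount_mul_div ht1 hn0 hm0 hn hm ht0).smul hx).add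
    ((tendsto_secondCount_mul_div ht1 hn0 hm0 hn hm ht0).smul hy)).add
    (tendsto_birk_stagedPoint_sub hs hφ ξ η hn hn0 hm hm0 ht1)
  rw [add_zero] at h
  exact h.congr fun j => add_sub_cancel _ _

end Convexity

theorem general_rotation_set_convex_general (s N : ℕ) (hs : 3 ≤ s)
    (φ : SymbSpace s → EuclideanSpace ℝ (Fin N)) (hφ : Continuous φ) :
    Convex ℝ (GenRot φ) := by
  rintro x ⟨ξ, n, hn, hn0, hx⟩ y ⟨η, m, hm, hm0, hy⟩ t b ht hb htb
  obtain rfl : b = 1 - t := by linarith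
  exact smul_add_one_sub_smul_mem_genRot hs hφ ξ η hn hn0 hm hm0 (by linarith) hx hy ht

/-- For `s ≥ 3`, `N ≥ 1` and a continuous observable `φ : Σ_s → ℝ^N`,
the general rotation set `G_φ` is convex. -/
theorem general_rotation_set_convex (s N : ℕ) (hs : 3 ≤ s) (hN : 1 ≤ N)
    (φ : SymbSpace s → EuclideanSpace ℝ (Fin N)) (hφ : Continuous φ) :
    Convex ℝ (GenRot φ) :=
  general_rotation_set_convex_general s N hs φ hφ
end

section
/- Let s ≥ 3 and N ≥ 1, and let φ : Σ_s → ℝ^N be continuous (with respect to the product topology on Σ_s). Then the set P_φ of all convex combinations of rotation vectors of periodic sequences is dense in the general rotation set G_φ: for every ρ ∈ G_φ and every ε > 0 there exist periodic sequences ξ^(1),…,ξ^(k) ∈ Σ_s (each ξ^(i) having a rotation vector ρ_i = ρ_φ(ξ^(i))) and reals t_1,…,t_k ≥ 0 with t_1 + … + t_k = 1 such that ‖t_1 ρ_1 + … + t_k ρ_k − ρ‖ ≤ ε. -/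
open Filter Topology

/-- `ρ` is the rotation vector `ρ_φ(ξ)`, i.e. the limit of the Birkhoff averages exists
and equals `ρ`. -/
def HasRotVec {s N : ℕ} (φ : SymbSpace s → EuclideanSpace ℝ (Fin N))
    (ξ : SymbSpace s) (ρ : EuclideanSpace ℝ (Fin N)) : Prop :=
  Tendsto (fun n => birk φ n ξ) atTop (nhds ρ)

/-! Approximate `ρ` by a Birkhoff average `A_n(ξ)` with `n` large. Since `s ≥ 3`, the word
`ξ₀ … ξ_{n-2}` can be closed up by one symbol different from `ξ_{n-2}` and `ξ₀`; repeating it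
gives an `n`-periodic `η` whose rotation vector is `A_n(η)`. As `Σ_s` is compact, `φ` only
depends, up to `ε`, on a window `[-M, M]` of coordinates, so `φ(σⁱη)` and `φ(σⁱξ)` are `ε`-close
except for `2M + 1` indices `i` near the ends, and `‖A_n(η) - A_n(ξ)‖ ≤ ε + O(M/n)`. Thus one
periodic orbit already suffices. -/

theorem exists_finset_forall_eq_imp_dist_lt {X ι α E : Type*} [TopologicalSpace X]
    [CompactSpace X] [TopologicalSpace α] [T2Space α] [PseudoMetricSpace E] {c : X → ι → α}
    (hc : Continuous c) (hc_inj : Function.Injective c) {f : X → E} (hf : Continuous f)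
    {ε : ℝ} (hε : 0 < ε) :
    ∃ I : Finset ι, ∀ x y, (∀ j ∈ I, c x j = c y j) → dist (f x) (f y) < ε := by
  -- the closed sets `K I` shrink to `∅` as `I` grows, so by compactness one of them is empty
  set K : Finset ι → Set (X × X) := fun I =>
    {p | ε ≤ dist (f p.1) (f p.2)} ∩ ⋂ j ∈ I, {p | c p.1 j = c p.2 j}
  have hK_closed : ∀ I, IsClosed (K I) := fun I =>
    (isClosed_le continuous_const ((hf.comp continuous_fst).dist (hf.comp continuous_snd))).inter
      (isClosed_biInter fun j _ => isClosed_eq ((continuous_apply j).comp (hc.comp continuous_fst))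
        ((continuous_apply j).comp (hc.comp continuous_snd)))
  have hK_empty : (Set.univ ∩ ⋂ I, K I) = ∅ := by
    refine Set.eq_empty_of_forall_notMem fun ⟨x, y⟩ ⟨_, hxy⟩ => ?_
    simp only [K, Set.mem_iInter, Set.mem_inter_iff, Set.mem_ofPred_eq] at hxy
    obtain rfl : x = y := hc_inj <| funext fun j => (hxy {j}).2 j (Finset.mem_singleton_self j)
    exact (hxy ∅).1.not_gt (by simpa using hε)
  have hK_anti : Directed (· ⊇ ·) K := Antitone.directed_ge fun I I' hII' =>
    Set.inter_subset_inter_right _ (Set.biInter_subset_biInter_left hII')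
  obtain ⟨I, hI⟩ := isCompact_univ.elim_directed_family_closed K hK_closed hK_empty hK_anti
  refine ⟨I, fun x y hxy => not_le.mp fun h => ?_⟩
  refine Set.eq_empty_iff_forall_notMem.mp hI (x, y) ⟨trivial, h, ?_⟩
  simpa only [Set.mem_iInter, Set.mem_ofPred_eq] using hxy

instance (s : ℕ) : CompactSpace (SymbSpace s) := by
  refine (isCompact_iff_compactSpace (s := {ξ : ℤ → Fin s | ∀ i, ξ i ≠ ξ (i + 1)})).mp
    (IsClosed.isCompact ?_)
  rw [Set.ofPred_forall]
  exact isClosed_iInter fun i => IsClosed.preimage (f := fun ξ : ℤ → Fin s => (ξ i, ξ (i + 1)))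
    (by fun_prop) (isClosed_discrete {p : Fin s × Fin s | p.1 ≠ p.2})

theorem tendsto_average_of_periodic {E : Type*} [NormedAddCommGroup E] [NormedSpace ℝ E]
    {f : ℕ → E} {q : ℕ} (hf : Function.Periodic f q) (hq : 0 < q) :
    Tendsto (fun n : ℕ => (n : ℝ)⁻¹ • ∑ i ∈ Finset.range n, f i) atTop
      (𝓝 ((q : ℝ)⁻¹ • ∑ i ∈ Finset.range q, f i)) := by
  set S := ∑ i ∈ Finset.range q, f i
  have hq' : (q : ℝ) ≠ 0 := by positivity
  -- the deviation of the partial sums from linear growth is periodic, hence bounded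
  set g : ℕ → E := fun n => ∑ i ∈ Finset.range n, f i - ((n : ℝ) / q) • S
  have hg : Function.Periodic g q := by
    intro n
    have hsum : ∑ i ∈ Finset.range (n + q), f i = S + ∑ i ∈ Finset.range n, f i := by
      rw [add_comm n, Finset.sum_range_add]
      exact congrArg (S + ·) (Finset.sum_congr rfl fun i _ => by rw [add_comm]; exact hf i)
    simp only [g, hsum, Nat.cast_add, add_div, div_self hq', add_smul, one_smul]
    abel
  have hg_bdd : IsBoundedUnder (· ≤ ·) atTop (norm ∘ g) :=
    isBoundedUnder_of ⟨∑ i ∈ Finset.range q, ‖g i‖, fun n => by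
      rw [Function.comp_apply, ← hg.map_mod_nat n]
      exact Finset.single_le_sum (fun i _ => norm_nonneg (g i))
        (Finset.mem_range.mpr (Nat.mod_lt n hq))⟩
  have hlim := tendsto_const_nhds (x := (q : ℝ)⁻¹ • S).add
    ((tendsto_inv_atTop_nhds_zero_nat (𝕜 := ℝ)).zero_smul_isBoundedUnder_le hg_bdd)
  rw [add_zero] at hlim
  refine hlim.congr' ?_
  filter_upwards [eventually_ne_atTop 0] with n hn
  have hn' : (n : ℝ) ≠ 0 := by positivity
  simp only [g, smul_sub, smul_smul]
  rw [inv_mul_eq_div, div_div_cancel_left' hn', add_sub_cancel]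

theorem exists_dist_lt_of_eq_of_natAbs_le {s : ℕ} {E : Type*} [PseudoMetricSpace E]
    {f : SymbSpace s → E} (hf : Continuous f) {ε : ℝ} (hε : 0 < ε) :
    ∃ M : ℕ, ∀ x y : SymbSpace s, (∀ j : ℤ, j.natAbs ≤ M → x.1 j = y.1 j) →
      dist (f x) (f y) < ε := by
  obtain ⟨I, hI⟩ := exists_finset_forall_eq_imp_dist_lt (X := SymbSpace s)
    continuous_subtype_val Subtype.val_injective hf hε
  exact ⟨I.sup Int.natAbs, fun x y hxy => hI x y fun j hj => hxy j (Finset.le_sup hj)⟩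

theorem shift_iterate_apply {s : ℕ} (x : SymbSpace s) (m : ℕ) (j : ℤ) :
    (shift^[m] x).1 j = x.1 (j + m) := by
  induction m generalizing j with
  | zero => simp
  | succ m ih =>
    rw [Function.iterate_succ_apply', shift, ih]
    exact congrArg x.1 (by push_cast; ring)

theorem hasRotVec_of_shift_iterate_eq {s N : ℕ} (φ : SymbSpace s → EuclideanSpace ℝ (Fin N))
    {η : SymbSpace s} {p : ℕ} (hp : 0 < p) (hη : shift^[p] η = η) :
    HasRotVec φ η (birk φ p η) :=
  tendsto_average_of_periodic (fun i => by rw [Function.iterate_add_apply, hη]) hp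

theorem apply_emod_ne_apply_add_one_emod {α : Type*} {n : ℕ} (hn : 0 < n) {w : ℤ → α}
    (hw : ∀ j : ℤ, 0 ≤ j → j + 1 < n → w j ≠ w (j + 1)) (hwrap : w (n - 1) ≠ w 0) (i : ℤ) :
    w (i % n) ≠ w ((i + 1) % n) := by
  have h0 : 0 ≤ i % n := Int.emod_nonneg i (by omega)
  have hlt : i % n < n := Int.emod_lt_of_pos i (by omega)
  rw [← Int.emod_add_emod]
  rcases (by omega : i % n + 1 < n ∨ i % n + 1 = n) with h | h
  · rw [Int.emod_eq_of_lt (by omega) h]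
    exact hw _ h0 h
  · rw [h, Int.emod_self, (by omega : i % n = n - 1)]
    exact hwrap

theorem exists_shift_iterate_eq_of_cyclic {s n : ℕ} (hn : 0 < n) {w : ℤ → Fin s}
    (hw : ∀ j : ℤ, 0 ≤ j → j + 1 < n → w j ≠ w (j + 1)) (hwrap : w (n - 1) ≠ w 0) :
    ∃ η : SymbSpace s, shift^[n] η = η ∧ ∀ j : ℤ, 0 ≤ j → j < n → η.1 j = w j := by
  refine ⟨⟨fun i => w (i % n), apply_emod_ne_apply_add_one_emod hn hw hwrap⟩, ?_, ?_⟩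
  · exact Subtype.ext <| funext fun i =>
      (shift_iterate_apply _ n i).trans (congrArg w (Int.add_emod_right i n))
  · intro j hj0 hjn
    exact congrArg w (Int.emod_eq_of_lt hj0 hjn)

theorem exists_periodic_eq_on_Ico {s n : ℕ} (hs : 3 ≤ s) (hn : 2 ≤ n)
    (ξ : SymbSpace s) :
    ∃ η : SymbSpace s, shift^[n] η = η ∧ ∀ j : ℤ, 0 ≤ j → j < n - 1 → η.1 j = ξ.1 j := by
  -- replace `ξ_{n-1}` by a symbol differing from `ξ_{n-2}` and from `ξ₀`
  have hcard :
      ({ξ.1 (n - 2), ξ.1 0} : Finset (Fin s)).card < (Finset.univ : Finset (Fin s)).card :=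
    Finset.card_le_two.trans_lt (by rw [Finset.card_univ, Fintype.card_fin]; omega)
  obtain ⟨a, -, ha⟩ := Finset.exists_mem_notMem_of_card_lt_card hcard
  rw [Finset.mem_insert, Finset.mem_singleton, not_or] at ha
  set w : ℤ → Fin s := fun j => if j < n - 1 then ξ.1 j else a
  have hw : ∀ j : ℤ, 0 ≤ j → j + 1 < n → w j ≠ w (j + 1) := by
    intro j _ hj
    rcases (by omega : j + 1 < n - 1 ∨ j = n - 2) with h | rfl
    · simpa only [w, if_pos h, if_pos (by omega : j < n - 1)] using ξ.2 j
    · simpa only [w, if_pos (by omega : (n : ℤ) - 2 < n - 1),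
        if_neg (by omega : ¬ ((n : ℤ) - 2 + 1 < n - 1))] using Ne.symm ha.1
  have hwrap : w (n - 1) ≠ w 0 := by
    simpa only [w, lt_irrefl, if_false, if_pos (by omega : (0 : ℤ) < n - 1)] using ha.2
  obtain ⟨η, hη, hηw⟩ := exists_shift_iterate_eq_of_cyclic (by omega) hw hwrap
  exact ⟨η, hη, fun j hj0 hjn => (hηw j hj0 (by omega)).trans (if_pos hjn)⟩

theorem norm_sum_range_le_of_le_off {E : Type*} [SeminormedAddCommGroup E] {d : ℕ → E}
    {n : ℕ} {B : Finset ℕ} {δ D : ℝ} (hδ : 0 ≤ δ) (hgood : ∀ i < n, i ∉ B → ‖d i‖ ≤ δ)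
    (hbad : ∀ i, ‖d i‖ ≤ D) :
    ‖∑ i ∈ Finset.range n, d i‖ ≤ n * δ + B.card * D := by
  have hD : 0 ≤ D := (norm_nonneg _).trans (hbad 0)
  calc ‖∑ i ∈ Finset.range n, d i‖
      ≤ ∑ i ∈ Finset.range n, (δ + if i ∈ B then D else 0) := by
        refine (norm_sum_le _ _).trans (Finset.sum_le_sum fun i hi => ?_)
        by_cases hiB : i ∈ B
        · simpa [hiB] using (hbad i).trans (le_add_of_nonneg_left hδ)
        · simpa [hiB] using hgood i (Finset.mem_range.mp hi) hiB
    _ = n * δ + (Finset.range n ∩ B).card * D := by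
        rw [Finset.sum_add_distrib, Finset.sum_ite_mem, Finset.sum_const, Finset.sum_const,
          Finset.card_range, nsmul_eq_mul, nsmul_eq_mul]
    _ ≤ n * δ + B.card * D := by
        gcongr
        exact Finset.inter_subset_right

theorem norm_birk_sub_birk_le {s N : ℕ} {φ : SymbSpace s → EuclideanSpace ℝ (Fin N)}
    {C δ : ℝ} {M n : ℕ} {x y : SymbSpace s} (hn : 0 < n) (hC : ∀ z, ‖φ z‖ ≤ C)
    (hM : ∀ x y : SymbSpace s, (∀ j : ℤ, j.natAbs ≤ M → x.1 j = y.1 j) → ‖φ x - φ y‖ ≤ δ)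
    (hxy : ∀ j : ℤ, 0 ≤ j → j < n - 1 → x.1 j = y.1 j) :
    ‖birk φ n x - birk φ n y‖ ≤ δ + (2 * M + 1) * (2 * C) / n := by
  set B := Finset.range M ∪ Finset.Ico (n - 1 - M) n
  have hB : (B.card : ℝ) ≤ 2 * M + 1 := by
    have : B.card ≤ 2 * M + 1 := (Finset.card_union_le _ _).trans <| by
      simp only [Finset.card_range, Nat.card_Ico]; omega
    exact_mod_cast this
  have hsum : ‖∑ i ∈ Finset.range n, (φ (shift^[i] x) - φ (shift^[i] y))‖
      ≤ n * δ + B.card * (2 * C) := by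
    refine norm_sum_range_le_of_le_off ((norm_nonneg _).trans (hM y y fun _ _ => rfl))
      (fun i hi hiB => hM _ _ fun j hj => ?_) fun i => ?_
    · simp only [B, Finset.mem_union, Finset.mem_range, Finset.mem_Ico, not_or, not_lt,
        not_and_or] at hiB
      rw [shift_iterate_apply, shift_iterate_apply]
      exact hxy _ (by omega) (by omega)
    · exact (norm_sub_le _ _).trans (by linarith [hC (shift^[i] x), hC (shift^[i] y)])
  have hn' : (0 : ℝ) < n := by exact_mod_cast hn
  calc ‖birk φ n x - birk φ n y‖
      = (n : ℝ)⁻¹ * ‖∑ i ∈ Finset.range n, (φ (shift^[i] x) - φ (shift^[i] y))‖ := by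
        rw [birk, birk, ← smul_sub, ← Finset.sum_sub_distrib, norm_smul, norm_inv,
          Real.norm_natCast]
    _ ≤ (n : ℝ)⁻¹ * (n * δ + (2 * M + 1) * (2 * C)) := by
        have hC0 : 0 ≤ C := (norm_nonneg _).trans (hC x)
        gcongr
        exact hsum.trans (by gcongr)
    _ = δ + (2 * M + 1) * (2 * C) / n := by field_simp

theorem eventually_exists_periodic_norm_birk_sub_le {s N : ℕ} (hs : 3 ≤ s)
    {φ : SymbSpace s → EuclideanSpace ℝ (Fin N)} (hφ : Continuous φ) (ξ : SymbSpace s)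
    {ε : ℝ} (hε : 0 < ε) :
    ∀ᶠ n in atTop, ∃ η : SymbSpace s, shift^[n] η = η ∧ ‖birk φ n η - birk φ n ξ‖ ≤ ε := by
  obtain ⟨C, hC⟩ := isCompact_univ.exists_bound_of_continuousOn hφ.continuousOn
  obtain ⟨M, hM⟩ := exists_dist_lt_of_eq_of_natAbs_le hφ (half_pos hε)
  have hsmall := (tendsto_order.1 (tendsto_const_div_atTop_nhds_zero_nat
    ((2 * M + 1) * (2 * C)))).2 (ε / 2) (half_pos hε)
  filter_upwards [eventually_ge_atTop 2, hsmall] with n hn hn_small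
  obtain ⟨η, hη, hηξ⟩ := exists_periodic_eq_on_Ico hs hn ξ
  refine ⟨η, hη, ?_⟩
  have := norm_birk_sub_birk_le (φ := φ) (by omega) (fun z => hC z trivial)
    (fun x y hxy => (dist_eq_norm (φ x) (φ y) ▸ hM x y hxy).le) hηξ
  linarith

theorem periodic_convex_combinations_dense_in_general_rotation_set_general
    (s N : ℕ) (hs : 3 ≤ s)
    (φ : SymbSpace s → EuclideanSpace ℝ (Fin N)) (hφ : Continuous φ) :
    ∀ ρ ∈ GenRot φ, ∀ ε : ℝ, 0 < ε →
      ∃ (k : ℕ), 0 < k ∧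
        ∃ (ξ : Fin k → SymbSpace s) (p : Fin k → ℕ)
          (ρs : Fin k → EuclideanSpace ℝ (Fin N)) (t : Fin k → ℝ),
          (∀ i, 0 < p i ∧ shift^[p i] (ξ i) = ξ i) ∧
          (∀ i, HasRotVec φ (ξ i) (ρs i)) ∧
          (∀ i, 0 ≤ t i) ∧ (∑ i, t i) = 1 ∧
          ‖(∑ i, t i • ρs i) - ρ‖ ≤ ε := by
  rintro ρ ⟨ξ, n, hn_mono, hn_pos, hlim⟩ ε hε
  have hclose : ∀ᶠ k in atTop, ‖birk φ (n k) ξ - ρ‖ < ε / 2 := by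
    simpa only [dist_eq_norm] using Metric.tendsto_nhds.mp hlim (ε / 2) (half_pos hε)
  have hper := hn_mono.tendsto_atTop.eventually
    (eventually_exists_periodic_norm_birk_sub_le hs hφ ξ (half_pos hε))
  obtain ⟨k, hξρ, η, hη, hηξ⟩ := (hclose.and hper).exists
  refine ⟨1, one_pos, fun _ => η, fun _ => n k, fun _ => birk φ (n k) η, fun _ => 1,
    fun _ => ⟨hn_pos k, hη⟩, fun _ => hasRotVec_of_shift_iterate_eq φ (hn_pos k) hη,
    fun _ => zero_le_one, by simp, ?_⟩
  simp only [Finset.univ_unique, Finset.sum_singleton, one_smul]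
  calc ‖birk φ (n k) η - ρ‖
      ≤ ‖birk φ (n k) η - birk φ (n k) ξ‖ + ‖birk φ (n k) ξ - ρ‖ :=
        norm_sub_le_norm_sub_add_norm_sub _ _ _
    _ ≤ ε := by linarith

/-- For `s ≥ 3`, `N ≥ 1` and a continuous observable `φ : Σ_s → ℝ^N`,
the set `P_φ` of convex combinations of rotation vectors of periodic sequences is dense
in the general rotation set `G_φ`. -/
theorem periodic_convex_combinations_dense_in_general_rotation_set
    (s N : ℕ) (hs : 3 ≤ s) (hN : 1 ≤ N)
    (φ : SymbSpace s → EuclideanSpace ℝ (Fin N)) (hφ : Continuous φ) :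
    ∀ ρ ∈ GenRot φ, ∀ ε : ℝ, 0 < ε →
      ∃ (k : ℕ), 0 < k ∧
        ∃ (ξ : Fin k → SymbSpace s) (p : Fin k → ℕ)
          (ρs : Fin k → EuclideanSpace ℝ (Fin N)) (t : Fin k → ℝ),
          (∀ i, 0 < p i ∧ shift^[p i] (ξ i) = ξ i) ∧
          (∀ i, HasRotVec φ (ξ i) (ρs i)) ∧
          (∀ i, 0 ≤ t i) ∧ (∑ i, t i) = 1 ∧
          ‖(∑ i, t i • ρs i) - ρ‖ ≤ ε :=
  periodic_convex_combinations_dense_in_general_rotation_set_general s N hs φ hφ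
end

section
/- Let s ≥ 3 and N ≥ 1. Suppose φ : Σ_s → ℝ^N is bounded by some R > 0 and exponentially locally determined. Let ξ ∈ Σ_s be periodic of period n with period block Ξ = (ξ_0, ξ_1, …, ξ_{n−1}) (so ξ_{n−1} ≠ ξ_0). Then for every ε > 0 there exist positive integers p and ℓ, a symbol j ∈ {1,…,s} with j ∉ {ξ_{n−1}, ξ_0}, and a periodic sequence ξ̃ ∈ Σ_s of period pℓn + 1 whose period block consists of the block Ξ repeated pℓ times followed by the single symbol j, such that ‖ρ_φ(ξ) − ρ_φ(ξ̃)‖ < ε. -/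
/-!
Choose a symbol `j` different from `ξ_{n-1}` and `ξ_0` (possible as `s ≥ 3`) and let `ξ̃` be the
sequence of period `pn + 1` whose block is `Ξ` repeated `p` times followed by `j`; here `ℓ = 1`.
For `i < pn` the points `σ^i ξ` and `σ^i ξ̃` agree on the window `[-i, pn - 1 - i]`, so exponential
locality bounds the difference of the Birkhoff sums of length `pn` along `ξ` and `ξ̃` by
`2C / (1 - δ)`, uniformly in `p`. Since `pn` is a multiple of the period of `ξ`, the Birkhoff sum
along `ξ` is exactly `pn · ρ_φ(ξ)`, hence `‖ρ_φ(ξ) - ρ_φ(ξ̃)‖ ≤ (2R + 2C / (1 - δ)) / (pn + 1)`,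
which is below `ε` for large `p`.
-/

open Filter Topology

/-- `φ` is exponentially locally determined: there are `C > 0` and `δ ∈ (0,1)` such that
whenever `ξ_j = ξ'_j` for all `-m ≤ j ≤ m'`, one has `‖φ(ξ) - φ(ξ')‖ ≤ C(δ^m + δ^{m'})`. -/
def ExpLocDet {s N : ℕ} (φ : SymbSpace s → EuclideanSpace ℝ (Fin N)) : Prop :=
  ∃ C : ℝ, 0 < C ∧ ∃ δ : ℝ, 0 < δ ∧ δ < 1 ∧
    ∀ (m m' : ℕ) (ξ ξ' : SymbSpace s),
      (∀ j : ℤ, -(m : ℤ) ≤ j → j ≤ (m' : ℤ) → ξ.1 j = ξ'.1 j) →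
      ‖φ ξ - φ ξ'‖ ≤ C * (δ ^ m + δ ^ m')

open Function Finset

section BirkhoffPeriodic

variable {α : Type*} {f : α → α} {n : ℕ} {x : α}

theorem Function.IsPeriodicPt.birkhoffSum_mul_add {M : Type*} [AddCommMonoid M]
    (hx : IsPeriodicPt f n x) (g : α → M) (q r : ℕ) :
    birkhoffSum f g (q * n + r) x = q • birkhoffSum f g n x + birkhoffSum f g r x := by
  induction q with
  | zero => simp
  | succ q ih =>
    rw [add_mul, one_mul, add_right_comm, add_comm _ n, birkhoffSum_add, hx.eq, ih, succ_nsmul']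
    abel

variable {E : Type*} [NormedAddCommGroup E] {g : α → E} {R : ℝ}

theorem norm_birkhoffSum_le_s3 (hg : ∀ a, ‖g a‖ ≤ R) (k : ℕ) (y : α) :
    ‖birkhoffSum f g k y‖ ≤ k * R :=
  (norm_sum_le _ _).trans <| by simpa using sum_le_sum fun i (_ : i ∈ range k) => hg (f^[i] y)

variable [NormedSpace ℝ E]

theorem norm_birkhoffAverage_le (hg : ∀ a, ‖g a‖ ≤ R) (k : ℕ) (y : α) :
    ‖birkhoffAverage ℝ f g k y‖ ≤ R := by
  rcases k.eq_zero_or_pos with rfl | hk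
  · simpa using (norm_nonneg _).trans (hg y)
  · rw [birkhoffAverage, norm_smul, norm_inv, Real.norm_natCast, inv_mul_le_iff₀ (by positivity)]
    exact norm_birkhoffSum_le_s3 hg k y

theorem Function.IsPeriodicPt.birkhoffSum_mul_add_sub_smul (hx : IsPeriodicPt f n x)
    (hn : 0 < n) (g : α → E) (q r : ℕ) :
    birkhoffSum f g (q * n + r) x - ((q * n + r : ℕ) : ℝ) • birkhoffAverage ℝ f g n x =
      birkhoffSum f g r x - (r : ℝ) • birkhoffAverage ℝ f g n x := by
  have hn' : (n : ℝ) ≠ 0 := by positivity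
  rw [hx.birkhoffSum_mul_add, birkhoffAverage, ← Nat.cast_smul_eq_nsmul ℝ, Nat.cast_add,
    add_smul, Nat.cast_mul, mul_smul, smul_inv_smul₀ hn']
  abel

theorem Function.IsPeriodicPt.tendsto_birkhoffAverage (hx : IsPeriodicPt f n x) (hn : 0 < n)
    (hg : ∀ a, ‖g a‖ ≤ R) :
    Tendsto (birkhoffAverage ℝ f g · x) atTop (𝓝 (birkhoffAverage ℝ f g n x)) := by
  set ρ := birkhoffAverage ℝ f g n x
  have hR : 0 ≤ R := (norm_nonneg _).trans (hg x)
  refine tendsto_iff_norm_sub_tendsto_zero.2 <| squeeze_zero' (.of_forall fun _ => norm_nonneg _)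
    ?_ (tendsto_const_div_atTop_nhds_zero_nat (2 * n * R))
  filter_upwards [eventually_gt_atTop 0] with k hk
  have hk' : (k : ℝ) ≠ 0 := by positivity
  have hsplit : birkhoffSum f g k x - (k : ℝ) • ρ =
      birkhoffSum f g (k % n) x - ((k % n : ℕ) : ℝ) • ρ := by
    conv_lhs => rw [← Nat.div_add_mod' k n]
    exact hx.birkhoffSum_mul_add_sub_smul hn g _ _
  have hmod : ((k % n : ℕ) : ℝ) ≤ n := by exact_mod_cast (Nat.mod_lt k hn).le
  calc ‖birkhoffAverage ℝ f g k x - ρ‖ = ‖birkhoffSum f g k x - (k : ℝ) • ρ‖ / k := by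
        have : birkhoffAverage ℝ f g k x - ρ = (k : ℝ)⁻¹ • (birkhoffSum f g k x - (k : ℝ) • ρ) := by
          rw [smul_sub, inv_smul_smul₀ hk']
          rfl
        rw [this, norm_smul, norm_inv, Real.norm_natCast, inv_mul_eq_div]
    _ ≤ 2 * n * R / k := by
        rw [hsplit]
        gcongr
        calc _ ≤ ‖birkhoffSum f g (k % n) x‖ + ‖((k % n : ℕ) : ℝ) • ρ‖ := norm_sub_le _ _
          _ ≤ n * R + n * R := by
            rw [norm_smul, Real.norm_natCast]
            gcongr
            · exact (norm_birkhoffSum_le_s3 hg _ x).trans (by gcongr)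
            · exact norm_birkhoffAverage_le hg n x
          _ = 2 * n * R := by ring

theorem Function.IsPeriodicPt.norm_birkhoffAverage_sub_birkhoffAverage_le
    (hx : IsPeriodicPt f n x) (hn : 0 < n) (hg : ∀ a, ‖g a‖ ≤ R) (p : ℕ) (y : α) :
    ‖birkhoffAverage ℝ f g n x - birkhoffAverage ℝ f g (p * n + 1) y‖ ≤
      (2 * R + ‖birkhoffSum f g (p * n) x - birkhoffSum f g (p * n) y‖) / ((p * n : ℕ) + 1) := by
  set ρ := birkhoffAverage ℝ f g n x
  set K := p * n with hK
  have hsum : birkhoffSum f g K x = (K : ℝ) • ρ := by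
    rw [hK, Nat.cast_mul]
    simpa [sub_eq_zero] using hx.birkhoffSum_mul_add_sub_smul hn g p 0
  have hscaled : ((K + 1 : ℕ) : ℝ) • (ρ - birkhoffAverage ℝ f g (K + 1) y) =
      ρ + (birkhoffSum f g K x - birkhoffSum f g K y) - g (f^[K] y) := by
    rw [smul_sub, birkhoffAverage, smul_inv_smul₀ (by positivity), birkhoffSum_succ, hsum,
      Nat.cast_succ, add_smul, one_smul]
    abel
  calc ‖ρ - birkhoffAverage ℝ f g (K + 1) y‖
      = ‖((K + 1 : ℕ) : ℝ) • (ρ - birkhoffAverage ℝ f g (K + 1) y)‖ / (K + 1) := by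
        rw [norm_smul, Real.norm_natCast, Nat.cast_succ, mul_div_cancel_left₀ _ (by positivity)]
    _ ≤ (R + ‖birkhoffSum f g K x - birkhoffSum f g K y‖ + R) / (K + 1) := by
        rw [hscaled]
        gcongr
        refine (norm_sub_le _ _).trans (add_le_add ((norm_add_le _ _).trans ?_) (hg _))
        gcongr
        exact norm_birkhoffAverage_le hg n x
    _ = _ := by ring

end BirkhoffPeriodic

section Symbolic

variable {s : ℕ}

theorem shift_iterate_apply_s3 (ξ : SymbSpace s) (k : ℕ) (i : ℤ) :
    (shift^[k] ξ).1 i = ξ.1 (i + k) := by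
  induction k generalizing i with
  | zero => simp
  | succ k ih =>
    rw [iterate_succ_apply']
    change (shift^[k] ξ).1 (i + 1) = _
    rw [ih]
    push_cast
    ring_nf

theorem isPeriodicPt_shift_iff {ξ : SymbSpace s} {n : ℕ} :
    IsPeriodicPt shift n ξ ↔ Periodic ξ.1 n := by
  constructor
  · intro h i
    rw [← shift_iterate_apply_s3, h.eq]
  · intro h
    exact Subtype.ext <| funext fun i => (shift_iterate_apply_s3 ξ n i).trans (h i)

theorem apply_mod_of_isPeriodicPt_shift {ξ : SymbSpace s} {n : ℕ} (h : IsPeriodicPt shift n ξ)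
    (i : ℕ) : ξ.1 i = ξ.1 ((i % n : ℕ) : ℤ) := by
  simpa only [shift_iterate_apply_s3, zero_add] using
    congrArg (fun η : SymbSpace s => η.1 0) (h.iterate_mod_apply i).symm

theorem hasRotVec_iff {N : ℕ} {φ : SymbSpace s → EuclideanSpace ℝ (Fin N)} {ξ : SymbSpace s}
    {ρ : EuclideanSpace ℝ (Fin N)} :
    HasRotVec φ ξ ρ ↔ Tendsto (birkhoffAverage ℝ shift φ · ξ) atTop (𝓝 ρ) :=
  Iff.rfl

theorem ExpLocDet.exists_norm_birkhoffSum_sub_le {N : ℕ}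
    {φ : SymbSpace s → EuclideanSpace ℝ (Fin N)} (hφ : ExpLocDet φ) :
    ∃ B, ∀ (K : ℕ) (ξ ξ' : SymbSpace s), (∀ k : ℤ, 0 ≤ k → k < K → ξ.1 k = ξ'.1 k) →
      ‖birkhoffSum shift φ K ξ - birkhoffSum shift φ K ξ'‖ ≤ B := by
  obtain ⟨C, hC, δ, hδ0, hδ1, hφ⟩ := hφ
  refine ⟨2 * C / (1 - δ), fun K ξ ξ' hagree => ?_⟩
  have hgeom : ∑ i ∈ range K, δ ^ i ≤ 1 / (1 - δ) := by
    simpa [← range_eq_Ico] using geom_sum_Ico_le_of_lt_one (m := 0) (n := K) hδ0.le hδ1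
  calc ‖birkhoffSum shift φ K ξ - birkhoffSum shift φ K ξ'‖
      ≤ ∑ i ∈ range K, ‖φ (shift^[i] ξ) - φ (shift^[i] ξ')‖ := by
        simpa only [dist_eq_norm] using dist_birkhoffSum_birkhoffSum_le shift φ K ξ ξ'
    _ ≤ ∑ i ∈ range K, C * (δ ^ i + δ ^ (K - 1 - i)) := by
        refine sum_le_sum fun i hi => hφ i (K - 1 - i) _ _ fun k hk₁ hk₂ => ?_
        have hiK : i < K := mem_range.1 hi
        simp only [shift_iterate_apply_s3]
        exact hagree _ (by omega) (by omega)
    _ = 2 * C * ∑ i ∈ range K, δ ^ i := by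
        rw [← mul_sum, sum_add_distrib, sum_range_reflect (δ ^ ·) K]
        ring
    _ ≤ 2 * C * (1 / (1 - δ)) := by gcongr
    _ = 2 * C / (1 - δ) := mul_one_div _ _

end Symbolic

section CycleAppend

variable {α : Type*}

theorem apply_emod_ne_apply_add_one_emod_s3 {b : ℤ → α} {M : ℤ} (hM : 0 < M)
    (hb : ∀ i, 0 ≤ i → i + 1 < M → b i ≠ b (i + 1)) (hwrap : b (M - 1) ≠ b 0) (k : ℤ) :
    b (k % M) ≠ b ((k + 1) % M) := by
  have h0 := Int.emod_nonneg k hM.ne'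
  have hlt := Int.emod_lt_of_pos k hM
  rw [← Int.emod_add_emod]
  rcases (show k % M + 1 < M ∨ k % M = M - 1 by omega) with h | h
  · rw [Int.emod_eq_of_lt (by omega) h]
    exact hb _ h0 h
  · rw [h, sub_add_cancel, Int.emod_self]
    exact hwrap

/-- The `(K + 1)`-periodic sequence with period block `x 0, …, x (K - 1), a`. -/
def cycleAppend (x : ℤ → α) (K : ℕ) (a : α) (k : ℤ) : α :=
  update x K a (k % (K + 1))

variable {x : ℤ → α} {K : ℕ} {a : α}

theorem cycleAppend_periodic : Periodic (cycleAppend x K a) (K + 1) := fun k => by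
  simp only [cycleAppend, Int.add_emod_right]

theorem cycleAppend_of_lt {k : ℤ} (h0 : 0 ≤ k) (hk : k < K) : cycleAppend x K a k = x k := by
  rw [cycleAppend, Int.emod_eq_of_lt h0 (by omega), update_of_ne hk.ne]

theorem cycleAppend_self : cycleAppend x K a K = a := by
  rw [cycleAppend, Int.emod_eq_of_lt (by omega) (by omega), update_self]

theorem cycleAppend_ne_add_one (hx : ∀ i, x i ≠ x (i + 1)) (hK : 0 < K) (hlast : x (K - 1) ≠ a)
    (hfirst : a ≠ x 0) (k : ℤ) : cycleAppend x K a k ≠ cycleAppend x K a (k + 1) := by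
  refine apply_emod_ne_apply_add_one_emod_s3 (by omega) (fun i hi₀ hi => ?_) ?_ k
  · rw [update_of_ne (by omega)]
    rcases eq_or_ne (i + 1) K with h | h
    · rw [h, update_self, show i = K - 1 by omega]
      exact hlast
    · rw [update_of_ne h]
      exact hx i
  · rw [add_sub_cancel_right, update_self, update_of_ne (by omega)]
    exact hfirst

end CycleAppend

theorem periodic_approx_by_special_periodic_general (s N : ℕ) (hs : 3 ≤ s)
    (φ : SymbSpace s → EuclideanSpace ℝ (Fin N))
    (R : ℝ) (hbdd : ∀ ξ, ‖φ ξ‖ ≤ R) (hloc : ExpLocDet φ)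
    (ξ : SymbSpace s) (n : ℕ) (hn : 0 < n) (hper : shift^[n] ξ = ξ)
    (ε : ℝ) (hε : 0 < ε) :
    ∃ (p ℓ : ℕ), 0 < p ∧ 0 < ℓ ∧
      ∃ j : Fin s, j ≠ ξ.1 ((n : ℤ) - 1) ∧ j ≠ ξ.1 0 ∧
        ∃ ξt : SymbSpace s,
          shift^[p * ℓ * n + 1] ξt = ξt ∧
          (∀ i : ℕ, i < p * ℓ * n → ξt.1 (i : ℤ) = ξ.1 ((i % n : ℕ) : ℤ)) ∧
          ξt.1 ((p * ℓ * n : ℕ) : ℤ) = j ∧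
          ∃ ρ ρt : EuclideanSpace ℝ (Fin N),
            HasRotVec φ ξ ρ ∧ HasRotVec φ ξt ρt ∧ ‖ρ - ρt‖ < ε := by
  have hξ : IsPeriodicPt shift n ξ := hper
  obtain ⟨j, hj_last, hj_first⟩ := Fin.exists_ne_and_ne_of_two_lt (ξ.1 (n - 1)) (ξ.1 0) hs
  obtain ⟨B, hB⟩ := hloc.exists_norm_birkhoffSum_sub_le
  obtain ⟨p, hp⟩ := exists_nat_gt ((2 * R + B) / ε)
  refine ⟨p + 1, 1, p.succ_pos, one_pos, ?_⟩
  rw [mul_one]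
  set K := (p + 1) * n with hK
  have hlast : ξ.1 (K - 1) ≠ j := by
    have hξ' : Periodic ξ.1 n := isPeriodicPt_shift_iff.1 hξ
    rw [hK, Nat.cast_mul, (hξ'.nat_mul (p + 1)).sub_eq', ← hξ'.sub_eq']
    exact hj_last.symm
  let ξt : SymbSpace s :=
    ⟨cycleAppend ξ.1 K j, cycleAppend_ne_add_one ξ.2 (by positivity) hlast hj_first⟩
  have hξt : IsPeriodicPt shift (K + 1) ξt :=
    isPeriodicPt_shift_iff.2 <| by rw [Nat.cast_succ]; exact cycleAppend_periodic
  have hagree : ∀ k : ℤ, 0 ≤ k → k < K → ξ.1 k = ξt.1 k :=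
    fun k h0 hk => (cycleAppend_of_lt h0 hk).symm
  refine ⟨j, hj_last, hj_first, ξt, hξt, fun i hi => ?_,
    cycleAppend_self, _, _, hasRotVec_iff.2 (hξ.tendsto_birkhoffAverage hn hbdd),
    hasRotVec_iff.2 (hξt.tendsto_birkhoffAverage K.succ_pos hbdd), ?_⟩
  · rw [← hagree i (by positivity) (by exact_mod_cast hi)]
    exact apply_mod_of_isPeriodicPt_shift hξ i
  · have hpK : (p : ℝ) < K + 1 := by
      norm_cast
      nlinarith
    calc _ ≤ (2 * R + ‖birkhoffSum shift φ K ξ - birkhoffSum shift φ K ξt‖) / (K + 1) :=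
          hξ.norm_birkhoffAverage_sub_birkhoffAverage_le hn hbdd (p + 1) ξt
      _ ≤ (2 * R + B) / (K + 1) := by gcongr; exact hB K ξ ξt hagree
      _ < ε := by
        rw [div_lt_iff₀ hε] at hp
        rw [div_lt_iff₀ (by positivity)]
        linarith [mul_lt_mul_of_pos_right hpK hε]

/-- a rotation vector of a periodic sequence `ξ` of period `n` with period
block `Ξ = (ξ_0,…,ξ_{n-1})` can be approximated within any `ε > 0` by the rotation
vector of a periodic sequence `ξ̃` of period `pℓn + 1` whose period block is `Ξ`
repeated `pℓ` times followed by one extra symbol `j ∉ {ξ_{n-1}, ξ_0}`. -/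
theorem periodic_approx_by_special_periodic (s N : ℕ) (hs : 3 ≤ s) (hN : 1 ≤ N)
    (φ : SymbSpace s → EuclideanSpace ℝ (Fin N))
    (R : ℝ) (hR : 0 < R) (hbdd : ∀ ξ, ‖φ ξ‖ ≤ R) (hloc : ExpLocDet φ)
    (ξ : SymbSpace s) (n : ℕ) (hn : 0 < n) (hper : shift^[n] ξ = ξ)
    (ε : ℝ) (hε : 0 < ε) :
    ∃ (p ℓ : ℕ), 0 < p ∧ 0 < ℓ ∧
      ∃ j : Fin s, j ≠ ξ.1 ((n : ℤ) - 1) ∧ j ≠ ξ.1 0 ∧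
        ∃ ξt : SymbSpace s,
          shift^[p * ℓ * n + 1] ξt = ξt ∧
          (∀ i : ℕ, i < p * ℓ * n → ξt.1 (i : ℤ) = ξ.1 ((i % n : ℕ) : ℤ)) ∧
          ξt.1 ((p * ℓ * n : ℕ) : ℤ) = j ∧
          ∃ ρ ρt : EuclideanSpace ℝ (Fin N),
            HasRotVec φ ξ ρ ∧ HasRotVec φ ξt ρt ∧ ‖ρ - ρt‖ < ε :=
  periodic_approx_by_special_periodic_general s N hs φ R hbdd hloc ξ n hn hper ε hε
end

section
/- Let N ≥ 1, let a_1, a_2, a_3 ∈ ℝ^N, and let ε > 0 satisfy ‖a_2 − a_3‖ > 12ε. Suppose φ : Σ_3 → ℝ^N is an observable such that ‖φ(η) − a_{η_0}‖ ≤ ε for every η ∈ Σ_3 (where η_0 is the 0-th symbol of η). Then there exists ξ ∈ Σ_3 whose rotation vector is not defined, i.e. the limit lim_{n→∞} (1/n) Σ_{i=0}^{n−1} φ(σ^i ξ) does not exist. -/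
open Filter Topology

/-!
Take `ξ` with `ξ_i = 0` at even times and, at odd times `i ∈ [k!, (k+1)!)`, `ξ_i = 1` or `2`
according to the parity of `k` (the paper's symbols `1, 2, 3` are `0, 1, 2 : Fin 3` here).
Each block dwarfs everything before it, so the averages of `a (ξ_i)` at time `(k+1)!` are within
`O(1/k)` of the midpoint of `a 0` and `a 1` or `a 2`, by the parity of `k`. The Birkhoff averages
of `φ` stay within `ε` of these, so a limit would be within `ε` of both midpoints, which are
`‖a 1 - a 2‖ / 2 > 6ε` apart.
-/

open Finset

theorem sum_Ico_two_mul_eq_zero {G : Type*} [AddCommMonoid G] {f : ℕ → G} {p q : ℕ}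
    (hf : ∀ j, p ≤ j → j < q → f (2 * j) + f (2 * j + 1) = 0) :
    ∑ i ∈ Ico (2 * p) (2 * q), f i = 0 := by
  induction q with
  | zero => simp
  | succ q ih =>
    rcases lt_or_ge q p with hqp | hpq
    · rw [Ico_eq_empty (by omega), sum_empty]
    · rw [show 2 * (q + 1) = 2 * q + 1 + 1 by ring, sum_Ico_succ_top (by omega),
        sum_Ico_succ_top (by omega), ih (fun j hpj hjq => hf j hpj (by omega)), zero_add,
        hf q hpq q.lt_succ_self]

theorem norm_average_sub_le {E : Type*} [SeminormedAddCommGroup E] [NormedSpace ℝ E]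
    {x : ℕ → E} {c : E} {m n : ℕ} {M : ℝ} (hn : 0 < n) (hmn : m ≤ n)
    (hblock : ∑ i ∈ Ico m n, (x i - c) = 0) (hM : ∀ i < m, ‖x i - c‖ ≤ M) :
    ‖(n : ℝ)⁻¹ • ∑ i ∈ range n, x i - c‖ ≤ m * M / n := by
  have hcenter :
      (n : ℝ)⁻¹ • ∑ i ∈ range n, x i - c = (n : ℝ)⁻¹ • ∑ i ∈ range n, (x i - c) := by
    rw [sum_sub_distrib, sum_const, card_range, smul_sub, ← Nat.cast_smul_eq_nsmul ℝ, smul_smul,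
      inv_mul_cancel₀ (by positivity), one_smul]
  rw [hcenter, ← sum_range_add_sum_Ico _ hmn, hblock, add_zero, norm_smul, norm_inv,
    Real.norm_natCast, inv_mul_eq_div]
  gcongr
  simpa using norm_sum_le_of_le (range m) fun i hi => hM i (mem_range.1 hi)

theorem shift_iterate_val {s : ℕ} (ξ : SymbSpace s) (i : ℕ) (j : ℤ) :
    (shift^[i] ξ).1 j = ξ.1 (j + i) := by
  induction i generalizing j with
  | zero => simp
  | succ i ih =>
    rw [Function.iterate_succ_apply', shift, ih]
    push_cast
    ring_nf

theorem norm_birk_sub_average_le {s N : ℕ} {φ : SymbSpace s → EuclideanSpace ℝ (Fin N)}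
    {a : Fin s → EuclideanSpace ℝ (Fin N)} {ε : ℝ} (hφ : ∀ η, ‖φ η - a (η.1 0)‖ ≤ ε)
    (ξ : SymbSpace s) {n : ℕ} (hn : 0 < n) :
    ‖birk φ n ξ - (n : ℝ)⁻¹ • ∑ i ∈ range n, a (ξ.1 i)‖ ≤ ε := by
  have hterm : ∀ i ∈ range n, ‖φ (shift^[i] ξ) - a (ξ.1 i)‖ ≤ ε := fun i _ => by
    simpa [shift_iterate_val] using hφ (shift^[i] ξ)
  rw [birk, ← smul_sub, ← sum_sub_distrib, norm_smul, norm_inv, Real.norm_natCast]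
  calc (n : ℝ)⁻¹ * ‖∑ i ∈ range n, (φ (shift^[i] ξ) - a (ξ.1 i))‖
      ≤ (n : ℝ)⁻¹ * (n * ε) := by
        gcongr
        simpa using norm_sum_le_of_le _ hterm
    _ = ε := by field_simp

theorem norm_sub_le_of_norm_sub_midpoint_le {E : Type*} [SeminormedAddCommGroup E]
    [NormedSpace ℝ E] {x y z ρ : E} {ε : ℝ} (hy : ‖ρ - midpoint ℝ x y‖ ≤ ε)
    (hz : ‖ρ - midpoint ℝ x z‖ ≤ ε) : ‖y - z‖ ≤ 4 * ε := calc
  ‖y - z‖ = 2 * ‖midpoint ℝ x y - midpoint ℝ x z‖ := by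
    rw [midpoint_eq_smul_add, midpoint_eq_smul_add, ← smul_sub, add_sub_add_left_eq_sub,
      norm_smul]
    norm_num
    ring
  _ ≤ 2 * (‖ρ - midpoint ℝ x y‖ + ‖ρ - midpoint ℝ x z‖) := by
    rw [norm_sub_rev ρ]
    gcongr
    exact norm_sub_le_norm_sub_add_norm_sub _ _ _
  _ ≤ 4 * ε := by linarith

def blockIndex (i : ℕ) : ℕ := Nat.findGreatest (fun k => k.factorial ≤ i) i

theorem blockIndex_eq {i k : ℕ} (hk : k.factorial ≤ i) (hi : i < (k + 1).factorial) :
    blockIndex i = k :=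
  Nat.findGreatest_eq_iff.2 ⟨(Nat.self_le_factorial k).trans hk, fun _ => hk,
    fun _ hkn _ hn => (hi.trans_le (Nat.factorial_le hkn)).not_ge hn⟩

def blockSymbol (k : ℕ) : Fin 3 := if Even k then 1 else 2

theorem blockSymbol_ne_zero (k : ℕ) : blockSymbol k ≠ 0 := by
  unfold blockSymbol; split <;> decide

def oscillatingSymbols (i : ℤ) : Fin 3 := if Even i then 0 else blockSymbol (blockIndex i.toNat)

def oscillatingTrajectory : SymbSpace 3 :=
  ⟨oscillatingSymbols, fun i => by
    have hpar : Even (i + 1) ↔ ¬Even i := Int.even_add_one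
    by_cases h : Even i <;>
      simp [oscillatingSymbols, h, hpar, blockSymbol_ne_zero, (blockSymbol_ne_zero _).symm]⟩

theorem oscillatingTrajectory_natCast (i : ℕ) :
    oscillatingTrajectory.1 i = if Even i then 0 else blockSymbol (blockIndex i) := by
  simp [oscillatingTrajectory, oscillatingSymbols, Int.even_coe_nat]

theorem sum_Ico_factorial_sub_midpoint_eq_zero {E : Type*} [AddCommGroup E] [Module ℝ E]
    (a : Fin 3 → E) {k : ℕ} (hk : 2 ≤ k) :
    ∑ i ∈ Ico k.factorial (k + 1).factorial,
      (a (oscillatingTrajectory.1 i) - midpoint ℝ (a 0) (a (blockSymbol k))) = 0 := by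
  have hblock : ∀ i, k.factorial ≤ i → i < (k + 1).factorial →
      oscillatingTrajectory.1 i = if Even i then 0 else blockSymbol k := fun i hki hik => by
    rw [oscillatingTrajectory_natCast, blockIndex_eq hki hik]
  obtain ⟨p, hp⟩ : 2 ∣ k.factorial := Nat.dvd_factorial two_pos hk
  obtain ⟨q, hq⟩ : 2 ∣ (k + 1).factorial := Nat.dvd_factorial two_pos (by omega)
  rw [hp, hq]
  refine sum_Ico_two_mul_eq_zero fun j hpj hjq => ?_
  rw [hblock _ (by omega) (by omega), hblock _ (by omega) (by omega)]
  simp only [even_two_mul, Nat.even_add_one, not_true_eq_false, if_true, if_false,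
    left_sub_midpoint, right_sub_midpoint, ← smul_add, sub_add_sub_cancel, sub_self, smul_zero]

theorem tendsto_average_oscillatingTrajectory {E : Type*} [SeminormedAddCommGroup E]
    [NormedSpace ℝ E] (a : Fin 3 → E) {s : ℕ → ℕ} (hs : Tendsto s atTop atTop) {v : Fin 3}
    (hv : ∀ j, blockSymbol (s j) = v) :
    Tendsto (fun j => ((s j + 1).factorial : ℝ)⁻¹ •
        ∑ i ∈ range (s j + 1).factorial, a (oscillatingTrajectory.1 i))
      atTop (𝓝 (midpoint ℝ (a 0) (a v))) := by
  obtain ⟨M, hM⟩ := Finite.bddAbove_range fun j => ‖a j - midpoint ℝ (a 0) (a v)‖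
  rw [tendsto_iff_norm_sub_tendsto_zero]
  refine squeeze_zero' (Eventually.of_forall fun _ => norm_nonneg _) ?_
    ((tendsto_const_div_atTop_nhds_zero_nat M).comp ((tendsto_add_atTop_nat 1).comp hs))
  filter_upwards [hs.eventually_ge_atTop 2] with j hj
  have hfac : ((s j + 1).factorial : ℝ) = (s j + 1) * (s j).factorial := by
    push_cast [Nat.factorial_succ]; rfl
  calc _ ≤ (s j).factorial * M / (s j + 1).factorial :=
        norm_average_sub_le (Nat.factorial_pos _) (Nat.factorial_le (Nat.le_succ _))
          (hv j ▸ sum_Ico_factorial_sub_midpoint_eq_zero a hj) fun i _ => hM ⟨_, rfl⟩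
    _ = M / ((s j + 1 : ℕ) : ℝ) := by
        rw [hfac]; push_cast; field_simp

theorem exists_trajectory_without_rotation_vector_general (N : ℕ)
    (a : Fin 3 → EuclideanSpace ℝ (Fin N)) (ε : ℝ)
    (ha : ‖a 1 - a 2‖ > 12 * ε)
    (φ : SymbSpace 3 → EuclideanSpace ℝ (Fin N))
    (hφ : ∀ η : SymbSpace 3, ‖φ η - a (η.1 0)‖ ≤ ε) :
    ∃ ξ : SymbSpace 3, ¬ ∃ ρ : EuclideanSpace ℝ (Fin N), HasRotVec φ ξ ρ := by
  refine ⟨oscillatingTrajectory, fun ⟨ρ, hρ⟩ => ?_⟩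
  have hfactorial : Tendsto Nat.factorial atTop atTop :=
    tendsto_atTop_mono Nat.self_le_factorial tendsto_id
  have hclose : ∀ {s : ℕ → ℕ} {v : Fin 3}, Tendsto s atTop atTop →
      (∀ j, blockSymbol (s j) = v) → ‖ρ - midpoint ℝ (a 0) (a v)‖ ≤ ε := fun hs hv =>
    le_of_tendsto
      (((hρ.comp (hfactorial.comp ((tendsto_add_atTop_nat 1).comp hs))).sub
        (tendsto_average_oscillatingTrajectory a hs hv)).norm)
      (Eventually.of_forall fun _ => norm_birk_sub_average_le hφ _ (Nat.factorial_pos _))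
  have h1 := hclose (s := fun j => 2 * j) (v := 1) (tendsto_id.const_mul_atTop' two_pos)
    fun j => by simp [blockSymbol]
  have h2 := hclose (s := fun j => 2 * j + 1) (v := 2)
    (tendsto_atTop_mono (fun j => (by omega : j ≤ 2 * j + 1)) tendsto_id)
    fun j => by simp [blockSymbol]
  linarith [norm_sub_le_of_norm_sub_midpoint_le h1 h2, norm_nonneg (ρ - midpoint ℝ (a 0) (a 1))]

/-- if `‖φ(η) - a_{η_0}‖ ≤ ε` for all `η ∈ Σ_3`, where
`‖a_2 - a_3‖ > 12ε`, then some `ξ ∈ Σ_3` has no rotation vector. -/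
theorem exists_trajectory_without_rotation_vector (N : ℕ) (hN : 1 ≤ N)
    (a : Fin 3 → EuclideanSpace ℝ (Fin N)) (ε : ℝ) (hε : 0 < ε)
    (ha : ‖a 1 - a 2‖ > 12 * ε)
    (φ : SymbSpace 3 → EuclideanSpace ℝ (Fin N))
    (hφ : ∀ η : SymbSpace 3, ‖φ η - a (η.1 0)‖ ≤ ε) :
    ∃ ξ : SymbSpace 3, ¬ ∃ ρ : EuclideanSpace ℝ (Fin N), HasRotVec φ ξ ρ :=
  exists_trajectory_without_rotation_vector_general N a ε ha φ hφ
end
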